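/- Let V be a highest weight representation of X(osp_{1|2n}) with highest vector ξ satisfying t_{ii}(u)ξ = λ_i(u)ξ for i = 1,…,2n+1. Then the series λ_i(u) satisfy the consistency conditions λ_i(u)·λ_{i′}(u+n−i+1/2) = λ_{i+1}(u)·λ_{(i+1)′}(u+n−i+1/2) for all i = 1,…,n. -/

import Mathlib

/-!
Common definitions for the Yangian `X(osp_{1|2n})` associated with the orthosymplectic
Lie superalgebra `osp(1|2n)`, following Molev, "Representations of the Yangians
associated with Lie superalgebras osp(1|2n)".

Indices are 0-based: the index set {1,…,2n+1} of the paper corresponds to `Fin (2n+1)`,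
the involution i ↦ i′ = 2n−i+2 corresponds to `pr : i ↦ 2n−i`, the parity ī is 1 unless
i is the middle index `n`, and τ_i = 1 for i ≤ n and −1 for i > n.

The extended Yangian is presented by the coefficients `t_{ij}^{(r)}` (`r ≥ 1`) of the series
`t_{ij}(u) = δ_{ij} + Σ_{r≥1} t_{ij}^{(r)} u^{−r}`, subject to the defining RTT relations,
written in the equivalent explicit component form (formula (2.9) of the paper), with
denominators cleared.  Working with the variables `x = u⁻¹` and `y = v⁻¹`, so that
`u − v = (y−x)/(xy)` and `u − v − κ = (y − x − κxy)/(xy)`, the relation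
`[t_{ij}(u), t_{kl}(v)] = (u−v)⁻¹ (⋯) − (u−v−κ)⁻¹ (⋯)` becomes the power series identity
`relL = relR` below, and the Yangian is the quotient of the free algebra by the
coefficient-wise relations.
-/

noncomputable section

namespace OspYangian

open Finset

/-- The size of the index set: `2n+1`. -/
abbrev NN (n : ℕ) : ℕ := 2 * n + 1

/-- Convenient constructor for indices. -/
def idx {n : ℕ} (i : ℕ) (h : i < 2 * n + 1) : Fin (NN n) := ⟨i, h⟩

/-- The involution `i ↦ i′` (0-based: `i ↦ 2n − i`). -/
def pr {n : ℕ} (i : Fin (NN n)) : Fin (NN n) := idx (2 * n - (i : ℕ)) (by omega)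

/-- The parity `ī`: `0` for the (even) middle index, `1` for the (odd) remaining ones. -/
def pb {n : ℕ} (i : Fin (NN n)) : ℕ := if (i : ℕ) = n then 0 else 1

/-- The sign `τ_i`: `1` for `i ≤ n`, `−1` for `i > n` (0-based). -/
def tau {n : ℕ} (i : Fin (NN n)) : ℂ := if (i : ℕ) ≤ n then 1 else -1

/-- `κ = −n − 1/2`. -/
def kappa (n : ℕ) : ℂ := -(n : ℂ) - 1 / 2

/-- The sign `(−1)^m`. -/
def sg (m : ℕ) : ℂ := (-1 : ℂ) ^ m

section GenericSeries

variable {I : Type*} {A : Type*} [Ring A] [Algebra ℂ A]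

/-- Given a family `t i j : ℕ → A` of coefficients of series `t_{ij}(u) = Σ_r t_{ij}^{(r)} u^{−r}`,
the series `t_{ij}(u)` as an element of `A⟦x⟧⟦y⟧` (constant in `y`), where `x = u⁻¹`. -/
def Tx (t : I → I → ℕ → A) (i j : I) : PowerSeries (PowerSeries A) :=
  PowerSeries.C (PowerSeries.mk (t i j))

/-- The series `t_{ij}(v)` as an element of `A⟦x⟧⟦y⟧` (constant in `x`), where `y = v⁻¹`. -/
def Ty (t : I → I → ℕ → A) (i j : I) : PowerSeries (PowerSeries A) :=
  PowerSeries.mk fun r => PowerSeries.C (t i j r)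

/-- The element `x = u⁻¹` of `A⟦x⟧⟦y⟧`. -/
def Xv (A : Type*) [Ring A] : PowerSeries (PowerSeries A) :=
  PowerSeries.C (PowerSeries.X : PowerSeries A)

/-- The element `y = v⁻¹` of `A⟦x⟧⟦y⟧`. -/
def Yv (A : Type*) [Ring A] : PowerSeries (PowerSeries A) := PowerSeries.X

end GenericSeries

section RTT

variable {A : Type*} [Ring A] [Algebra ℂ A]

/-- Left-hand side of the defining relation of `X(osp_{1|2n})` for a family `t` of series
coefficients: `(u−v)(u−v−κ)·[t_{ij}(u), t_{kl}(v)]` (super-commutator), multiplied by `(xy)²`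
to clear denominators; here `x = u⁻¹`, `y = v⁻¹`. -/
def relL (n : ℕ) (t : Fin (NN n) → Fin (NN n) → ℕ → A) (i j k l : Fin (NN n)) :
    PowerSeries (PowerSeries A) :=
  (Yv A - Xv A) * (Yv A - Xv A - kappa n • (Xv A * Yv A)) *
    (Tx t i j * Ty t k l - sg ((pb i + pb j) * (pb k + pb l)) • (Ty t k l * Tx t i j))

/-- Right-hand side of the defining relation of `X(osp_{1|2n})`:
`(u−v−κ)·A − (u−v)·B` multiplied by `(xy)²`, where
`A = (−1)^{īj̄+īk̄+j̄k̄} (t_{kj}(u)t_{il}(v) − t_{kj}(v)t_{il}(u))` and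
`B = δ_{k i′} Σ_p (−1)^{ī+īj̄+j̄p̄} τ_iτ_p t_{pj}(u)t_{p′l}(v)
   − δ_{l j′} Σ_p (−1)^{j̄+p̄+īk̄+j̄k̄+īp̄} τ_jτ_p t_{kp′}(v)t_{ip}(u)`. -/
def relR (n : ℕ) (t : Fin (NN n) → Fin (NN n) → ℕ → A) (i j k l : Fin (NN n)) :
    PowerSeries (PowerSeries A) :=
  (Xv A * Yv A) * (Yv A - Xv A - kappa n • (Xv A * Yv A)) *
    (sg (pb i * pb j + pb i * pb k + pb j * pb k) •
      (Tx t k j * Ty t i l - Ty t k j * Tx t i l))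
  - (Xv A * Yv A) * (Yv A - Xv A) *
    ((if k = pr i then
        ∑ p : Fin (NN n), (sg (pb i + pb i * pb j + pb j * pb p) * tau i * tau p) •
          (Tx t p j * Ty t (pr p) l)
      else 0)
     - (if l = pr j then
        ∑ p : Fin (NN n), (sg (pb j + pb p + pb i * pb k + pb j * pb k + pb i * pb p)
            * tau j * tau p) • (Ty t k (pr p) * Tx t i p)
      else 0))

/-- A family of matrix elements `t i j : ℕ → A` (the coefficients of series `t_{ij}(u)`)
satisfies the defining `RTT`-relation of `X(osp_{1|2n})`. -/
def SatisfiesRTT (n : ℕ) (t : Fin (NN n) → Fin (NN n) → ℕ → A) : Prop :=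
  ∀ i j k l : Fin (NN n), relL n t i j k l = relR n t i j k l

end RTT

/-- The free algebra on the generators `t_{ij}^{(r)}`, `r ≥ 1` (the last component `r : ℕ`
encodes the generator `t_{ij}^{(r+1)}`). -/
abbrev FA (n : ℕ) := FreeAlgebra ℂ (Fin (NN n) × Fin (NN n) × ℕ)

/-- The coefficients of the generating series `t_{ij}(u)` in the free algebra:
`t_{ij}^{(0)} = δ_{ij}` and `t_{ij}^{(r)}` is a free generator for `r ≥ 1`. -/
def fgen (n : ℕ) : Fin (NN n) → Fin (NN n) → ℕ → FA n := fun i j r =>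
  if r = 0 then (if i = j then 1 else 0) else FreeAlgebra.ι ℂ (i, j, r - 1)

/-- The defining relations of the extended Yangian: all coefficients of `relL` are identified
with the corresponding coefficients of `relR`. -/
def yrel (n : ℕ) : FA n → FA n → Prop := fun a b =>
  ∃ (i j k l : Fin (NN n)) (r s : ℕ),
    a = PowerSeries.coeff s
          (PowerSeries.coeff r (relL n (fgen n) i j k l)) ∧
    b = PowerSeries.coeff s
          (PowerSeries.coeff r (relR n (fgen n) i j k l))

/-- The extended Yangian `X(osp_{1|2n})`. -/
abbrev XX (n : ℕ) := RingQuot (yrel n)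

/-- The coefficient `t_{ij}^{(r)}` of the series `t_{ij}(u) = Σ_{r≥0} t_{ij}^{(r)} u^{−r}`
in the extended Yangian (`TT n i j 0 = δ_{ij}`). -/
def TT (n : ℕ) (i j : Fin (NN n)) (r : ℕ) : XX n :=
  RingQuot.mkAlgHom ℂ (yrel n) (fgen n i j r)

section Shift

variable {M : Type*} [AddCommMonoid M] [Module ℂ M]

/-- The coefficient of `u^{−s}` in `f(u+a)`, where `f(u) = Σ_r c r · u^{−r}`:
`Σ_{r≤s} (−1)^{s−r} C(s−1, s−r) a^{s−r} · c r`. -/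
def shiftCoeff (a : ℂ) (c : ℕ → M) (s : ℕ) : M :=
  ∑ r ∈ Finset.range (s + 1),
    ((-1 : ℂ) ^ (s - r) * (Nat.choose (s - 1) (s - r) : ℂ) * a ^ (s - r)) • c r

/-- For a power series `f` in `u⁻¹`, the power series of `f(u+a)` in `u⁻¹`. -/
def shiftSeries (a : ℂ) (f : PowerSeries ℂ) : PowerSeries ℂ :=
  PowerSeries.mk fun s => shiftCoeff a (fun r => PowerSeries.coeff r f) s

end Shift

/-- The consistency conditions (3.4) of the paper:
`λ_i(u) λ_{i′}(u+n−i+1/2) = λ_{i+1}(u) λ_{(i+1)′}(u+n−i+1/2)` for `i = 1,…,n`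
(0-based: positions `i` and `i+1` with `i < n`, shift `n − i − 1/2`). -/
def Consistent (n : ℕ) (lam : Fin (NN n) → PowerSeries ℂ) : Prop :=
  ∀ (i : ℕ) (h : i < n),
    lam (idx i (by omega)) *
        shiftSeries ((n : ℂ) - (i : ℂ) - 1 / 2) (lam (pr (idx i (by omega)))) =
      lam (idx (i + 1) (by omega)) *
        shiftSeries ((n : ℂ) - (i : ℂ) - 1 / 2) (lam (pr (idx (i + 1) (by omega))))

/-- `V` is a highest weight module over `X(osp_{1|2n})` with highest vector `xi` and
highest weight `lam` (a tuple of series in `1 + u⁻¹ℂ[[u⁻¹]]`): `xi` is nonzero, generates `V`,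
is annihilated by all `t_{ij}(u)` with `i < j` and is an eigenvector of all `t_{ii}(u)`
with eigenvalue the series `λ_i(u)`. -/
def IsHighestWeight (n : ℕ) {V : Type*} [AddCommGroup V] [Module ℂ V] [Module (XX n) V]
    (xi : V) (lam : Fin (NN n) → PowerSeries ℂ) : Prop :=
  xi ≠ 0 ∧ Submodule.span (XX n) {xi} = ⊤ ∧
  (∀ i j : Fin (NN n), i < j → ∀ r : ℕ, TT n i j r • xi = 0) ∧
  (∀ (i : Fin (NN n)) (r : ℕ), TT n i i r • xi = (PowerSeries.coeff r (lam i)) • xi) ∧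
  (∀ i : Fin (NN n), PowerSeries.constantCoeff (lam i) = 1)

/-- The generators of the left ideal defining the Verma module `M(λ(u))`: all coefficients
`t_{ij}^{(r)}`, `r ≥ 1`, with `i < j`, and all `t_{ii}^{(r)} − λ_i^{(r)}`, `r ≥ 1`. -/
def vermaGens (n : ℕ) (lam : Fin (NN n) → PowerSeries ℂ) : Set (XX n) :=
  {x | (∃ (i j : Fin (NN n)) (r : ℕ), i < j ∧ x = TT n i j (r + 1)) ∨
       (∃ (i : Fin (NN n)) (r : ℕ),
         x = TT n i i (r + 1) - algebraMap ℂ (XX n) (PowerSeries.coeff (r + 1) (lam i)))}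

/-- The left ideal defining the Verma module `M(λ(u))`. -/
def vermaIdeal (n : ℕ) (lam : Fin (NN n) → PowerSeries ℂ) : Submodule (XX n) (XX n) :=
  Submodule.span (XX n) (vermaGens n lam)

/-- The Verma module `M(λ(u))`. -/
abbrev Verma (n : ℕ) (lam : Fin (NN n) → PowerSeries ℂ) :=
  XX n ⧸ vermaIdeal n lam

/-- The sum of all proper submodules of the Verma module `M(λ(u))` (its unique maximal
proper submodule). -/
def vermaRad (n : ℕ) (lam : Fin (NN n) → PowerSeries ℂ) : Submodule (XX n) (Verma n lam) :=
  sSup {W : Submodule (XX n) (Verma n lam) | W ≠ ⊤}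

/-- The irreducible quotient `L(λ(u))` of the Verma module `M(λ(u))`. -/
abbrev Lmod (n : ℕ) (lam : Fin (NN n) → PowerSeries ℂ) :=
  Verma n lam ⧸ vermaRad n lam

/-- The Drinfeld polynomial condition `λ₊(u)/λ₋(u) = P(u+1)/P(u)` for a pair of series
`λ₋(u), λ₊(u) ∈ 1 + u⁻¹ℂ[[u⁻¹]]` and a polynomial `P`, i.e. the equality of series
`λ₊(u)·u^{−deg P}·P(u) = λ₋(u)·u^{−deg P}·P(u+1)`; here `u^{−deg P}·P(u)` is the reversed
polynomial `P.reverse` regarded as a power series in `u⁻¹`. -/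
def DrinfeldPair (lamLow lamHigh : PowerSeries ℂ) (P : Polynomial ℂ) : Prop :=
  lamHigh * ((P.reverse : Polynomial ℂ) : PowerSeries ℂ) =
    lamLow * (((P.comp (Polynomial.X + 1)).reverse : Polynomial ℂ) : PowerSeries ℂ)

end OspYangian
namespace OspYangian

open Finset

section ModuleLemmas

variable {n : ℕ} {V : Type*} [AddCommGroup V] [Module ℂ V] [Module (XX n) V]
  [IsScalarTower ℂ (XX n) V]

theorem smul_comm_alg (c : ℂ) (x : XX n) (v : V) : x • (c • v) = c • (x • v) := by
  rw [← algebraMap_smul (XX n) c v, ← mul_smul, ← Algebra.commutes, mul_smul,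
    algebraMap_smul]

end ModuleLemmas

section Vplus

variable (n : ℕ) (V : Type*) [AddCommGroup V] [Module ℂ V] [Module (XX n) V]
  [IsScalarTower ℂ (XX n) V]

/-- The subspace `V⁺ = {η ∈ V | t_{1j}(u)η = 0 (j > 1), t_{i1′}(u)η = 0 (i < 1′)}`
(0-based: first index `0`, last index `2n`). -/
def Vplus : Set V :=
  {η | (∀ j : Fin (NN n), 0 < (j : ℕ) → ∀ r : ℕ, TT n (idx 0 (by omega)) j r • η = 0) ∧
       (∀ i : Fin (NN n), (i : ℕ) < 2 * n → ∀ r : ℕ, TT n i (idx (2 * n) (by omega)) r • η = 0)}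

/-- `V⁺` as a `ℂ`-subspace of `V`. -/
def VplusSub : Submodule ℂ V where
  carrier := Vplus n V
  zero_mem' := ⟨fun _ _ _ => smul_zero _, fun _ _ _ => smul_zero _⟩
  add_mem' := by
    rintro a b ⟨h1, h2⟩ ⟨g1, g2⟩
    exact ⟨fun j hj r => by rw [smul_add, h1 j hj r, g1 j hj r, add_zero],
           fun i hi r => by rw [smul_add, h2 i hi r, g2 i hi r, add_zero]⟩
  smul_mem' := by
    rintro c x ⟨h1, h2⟩
    exact ⟨fun j hj r => by rw [smul_comm_alg, h1 j hj r, smul_zero],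
           fun i hi r => by rw [smul_comm_alg, h2 i hi r, smul_zero]⟩

/-- The subspace `V⁰ = {η ∈ V | t_{ij}(u)η = 0 for all i < j}`. -/
def Vzero : Set V :=
  {η | ∀ i j : Fin (NN n), i < j → ∀ r : ℕ, TT n i j r • η = 0}

end Vplus

/-- The embedding of index sets `{1,…,2n+1} ↪ {1,…,2(n+1)+1}`, `i ↦ i+1`, used in the
reduction from `X(osp_{1|2(n+1)})` to `X(osp_{1|2n})`. -/
def emb {m : ℕ} (i : Fin (NN m)) : Fin (NN (m + 1)) :=
  idx ((i : ℕ) + 1) (by have h : (i : ℕ) < 2 * m + 1 := i.isLt; omega)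

section Yangian

/-- `φ` is the automorphism `t_{ij}(u) ↦ f(u) t_{ij}(u)` of `X(osp_{1|2n})`
for the series `f(u) = Σ_s f_s u^{−s}` with `f_0 = 1`. -/
def IsMultAut (n : ℕ) (f : ℕ → ℂ) (φ : XX n →ₐ[ℂ] XX n) : Prop :=
  f 0 = 1 ∧ ∀ (i j : Fin (NN n)) (r : ℕ),
    φ (TT n i j r) = ∑ s ∈ Finset.range (r + 1), f s • TT n i j (r - s)

/-- The Yangian `Y(osp_{1|2n})`: the subalgebra of `X(osp_{1|2n})` of elements stable under
all the automorphisms `t_{ij}(u) ↦ f(u) t_{ij}(u)`. -/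
def Ysub (n : ℕ) : Subalgebra ℂ (XX n) where
  carrier := {z | ∀ (f : ℕ → ℂ) (φ : XX n →ₐ[ℂ] XX n), IsMultAut n f φ → φ z = z}
  mul_mem' := by
    intro a b ha hb f φ hφ
    rw [map_mul, ha f φ hφ, hb f φ hφ]
  one_mem' := by
    intro f φ hφ
    exact map_one φ
  add_mem' := by
    intro a b ha hb f φ hφ
    rw [map_add, ha f φ hφ, hb f φ hφ]
  zero_mem' := by
    intro f φ hφ
    exact map_zero φ
  algebraMap_mem' := by
    intro c f φ hφ
    exact φ.commutes c

/-- A finite-dimensional irreducible representation of the Yangian `Y(osp_{1|2n})`. -/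
structure FDRep (n : ℕ) where
  carrier : Type
  [ab : AddCommGroup carrier]
  [mc : Module ℂ carrier]
  [my : Module (Ysub n) carrier]
  [tw : IsScalarTower ℂ (Ysub n) carrier]
  fd : FiniteDimensional ℂ carrier
  simple : IsSimpleModule (Ysub n) carrier

attribute [instance] FDRep.ab FDRep.mc FDRep.my FDRep.tw

/-- Isomorphism of representations of `Y(osp_{1|2n})`. -/
def fdrepSetoid (n : ℕ) : Setoid (FDRep n) where
  r V W := Nonempty (V.carrier ≃ₗ[Ysub n] W.carrier)
  iseqv := ⟨fun _ => ⟨LinearEquiv.refl _ _⟩,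
    fun ⟨e⟩ => ⟨e.symm⟩, fun ⟨e⟩ ⟨f⟩ => ⟨e.trans f⟩⟩

end Yangian

end OspYangian
namespace OspYangian

open Finset

section VectorRep

variable (n : ℕ)

/-- The coefficient at `u^{−r}` of the image of `t_{ij}(u)` under the vector representation
`t_{ij}(u) ↦ δ_{ij} + u⁻¹ e_{ij} (−1)^{ī} − (u+κ)⁻¹ e_{j′i′} (−1)^{īj̄} τ_i τ_j`
of `X(osp_{1|2n})` on `ℂ^{1|2n}`, as a matrix. -/
def vecMat (i j : Fin (NN n)) (r : ℕ) : Matrix (Fin (NN n)) (Fin (NN n)) ℂ :=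
  if r = 0 then (if i = j then 1 else 0)
  else (if r = 1 then (sg (pb i)) • Matrix.single i j (1 : ℂ) else 0)
    - ((-(kappa n)) ^ (r - 1) * sg (pb i * pb j) * tau i * tau j) •
        Matrix.single (pr j) (pr i) (1 : ℂ)

/-- The entry at `(a,b)` of the matrix of `t_{ij}(u)` in the vector representation,
as a function of a complex number `u`. -/
def vrepE (u : ℂ) (i j a b : Fin (NN n)) : ℂ :=
  (if i = j ∧ a = b then 1 else 0)
  + u⁻¹ * sg (pb i) * (if a = i ∧ b = j then 1 else 0)
  - (u + kappa n)⁻¹ * sg (pb i * pb j) * tau i * tau j *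
      (if a = pr j ∧ b = pr i then 1 else 0)

/-- The entry at `(a,b)` of the coefficient at `u^{−s}` of the matrix of `t_{ij}(u−m)` in the
vector representation, using `(u−m)⁻¹ = Σ_{s≥1} m^{s−1} u^{−s}` and
`(u−m+κ)⁻¹ = Σ_{s≥1} (m−κ)^{s−1} u^{−s}`. -/
def vrepCE (m : ℂ) (s : ℕ) (i j a b : Fin (NN n)) : ℂ :=
  if s = 0 then (if i = j ∧ a = b then 1 else 0)
  else m ^ (s - 1) * sg (pb i) * (if a = i ∧ b = j then 1 else 0)
    - (m - kappa n) ^ (s - 1) * sg (pb i * pb j) * tau i * tau j *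
        (if a = pr j ∧ b = pr i then 1 else 0)

variable (k : ℕ)

/-- The `k`-fold tensor power `(ℂ^{1|2n})^{⊗k}`, realized as functions on multi-indices. -/
abbrev Wk := (Fin k → Fin (NN n)) → ℂ

/-- The Koszul sign arising when the elementary tensor operator
`t_{a_0 a_1} ⊗ t_{a_1 a_2} ⊗ ⋯ ⊗ t_{a_{k−1} a_k}` (each factor of parity
`p(a_{p−1}) + p(a_p)`) is applied to the basis vector `e_{d_1} ⊗ ⋯ ⊗ e_{d_k}`:
`(−1)^{Σ_p (p(a_{p−1})+p(a_p))·(p(d_1)+⋯+p(d_{p−1}))}`. -/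
def kosz (a : Fin (k + 1) → Fin (NN n)) (d : Fin k → Fin (NN n)) : ℂ :=
  sg (∑ p : Fin k, (pb (a p.castSucc) + pb (a p.succ)) *
    (∑ q : Fin k, if (q : ℕ) < (p : ℕ) then pb (d q) else 0))

/-- The matrix of the operator
`T_{ij}(u) = Σ_{a_1,…,a_{k−1}} t_{i a_1}(u) ⊗ t_{a_1 a_2}(u−1) ⊗ ⋯ ⊗ t_{a_{k−1} j}(u−k+1)`
on `(ℂ^{1|2n})^{⊗k}`, each tensor factor acting through the vector representation and the
tensor products taken with the super sign convention. -/
def TopMat (u : ℂ) (i j : Fin (NN n)) :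
    Matrix (Fin k → Fin (NN n)) (Fin k → Fin (NN n)) ℂ := fun c d =>
  ∑ a : Fin (k + 1) → Fin (NN n),
    if a 0 = i ∧ a (Fin.last k) = j then
      kosz n k a d *
        ∏ p : Fin k, vrepE n (u - ((p : ℕ) : ℂ)) (a p.castSucc) (a p.succ) (c p) (d p)
    else 0

/-- The matrix of the coefficient at `u^{−r}` of the operator `T_{ij}(u)` on
`(ℂ^{1|2n})^{⊗k}` (sum over compositions `r = r_1 + ⋯ + r_k` of products of coefficients of
the shifted vector representations). -/
def TopCMat (r : ℕ) (i j : Fin (NN n)) :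
    Matrix (Fin k → Fin (NN n)) (Fin k → Fin (NN n)) ℂ := fun c d =>
  ∑ a : Fin (k + 1) → Fin (NN n),
    if a 0 = i ∧ a (Fin.last k) = j then
      kosz n k a d *
        ∑ rr ∈ Finset.Nat.antidiagonalTuple k r,
          ∏ p : Fin k, vrepCE n ((p : ℕ) : ℂ) (rr p) (a p.castSucc) (a p.succ) (c p) (d p)
    else 0

/-- The antisymmetric vector `ξ_k = Σ_{σ ∈ S_k} sgn(σ) e_{σ(1)} ⊗ ⋯ ⊗ e_{σ(k)}`. -/
def xiVec (hk : k ≤ NN n) : Wk n k := fun c =>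
  ∑ σ : Equiv.Perm (Fin k),
    ((Equiv.Perm.sign σ : ℤ) : ℂ) * (if c = fun p => Fin.castLE hk (σ p) then 1 else 0)

end VectorRep

section SuperTranspose

variable (n : ℕ)

/-- The super-transposition `t : End ℂ^{1|2n} → End ℂ^{1|2n}`, the linear extension of
`e_{ij} ↦ e_{j′i′} (−1)^{īj̄+ī} τ_i τ_j`. -/
def stpM (A : Matrix (Fin (NN n)) (Fin (NN n)) ℂ) : Matrix (Fin (NN n)) (Fin (NN n)) ℂ :=
  ∑ i : Fin (NN n), ∑ j : Fin (NN n),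
    (A i j * sg (pb i * pb j + pb i) * tau i * tau j) •
      Matrix.single (pr j) (pr i) (1 : ℂ)

/-- `End(ℂ^{1|2n}) ⊗ End(ℂ^{1|2n})` realized as operators on `ℂ^{1|2n} ⊗ ℂ^{1|2n}`. -/
abbrev MatP := Matrix (Fin (NN n) × Fin (NN n)) (Fin (NN n) × Fin (NN n)) ℂ

/-- The elementary tensor `e_{ij} ⊗ e_{kl}` as an operator on `ℂ^{1|2n} ⊗ ℂ^{1|2n}`,
with the Koszul sign convention `(a ⊗ b)(v ⊗ w) = (−1)^{|b||v|} av ⊗ bw`. -/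
def elemT2 (i j k l : Fin (NN n)) : MatP n := fun x y =>
  if x = (i, k) ∧ y = (j, l) then sg ((pb k + pb l) * pb j) else 0

/-- The operator `P = Σ_{i,j} e_{ij} ⊗ e_{ji} (−1)^{j̄}`. -/
def Pmat : MatP n := ∑ i : Fin (NN n), ∑ j : Fin (NN n), sg (pb j) • elemT2 n i j j i

/-- The operator `Q = Σ_{i,j} e_{ij} ⊗ e_{i′j′} (−1)^{īj̄} τ_i τ_j`. -/
def Qmat : MatP n := ∑ i : Fin (NN n), ∑ j : Fin (NN n),
  (sg (pb i * pb j) * tau i * tau j) • elemT2 n i j (pr i) (pr j)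

/-- The super-transposition applied to the first tensor factor of
`End(ℂ^{1|2n}) ⊗ End(ℂ^{1|2n})`: extract the coefficients of `M` on elementary tensors
`e_{ij} ⊗ e_{kl}` and apply `t(e_{ij}) = e_{j′i′}(−1)^{īj̄+ī}τ_iτ_j`. -/
def stp1 (M : MatP n) : MatP n :=
  ∑ i : Fin (NN n), ∑ j : Fin (NN n), ∑ k : Fin (NN n), ∑ l : Fin (NN n),
    (M (i, k) (j, l) * sg ((pb k + pb l) * pb j) * sg (pb i * pb j + pb i) * tau i * tau j) •
      elemT2 n (pr j) (pr i) k l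

/-- The super-transposition applied to the second tensor factor. -/
def stp2 (M : MatP n) : MatP n :=
  ∑ i : Fin (NN n), ∑ j : Fin (NN n), ∑ k : Fin (NN n), ∑ l : Fin (NN n),
    (M (i, k) (j, l) * sg ((pb k + pb l) * pb j) * sg (pb k * pb l + pb k) * tau k * tau l) •
      elemT2 n i j (pr l) (pr k)

/-- `End(ℂ^{1|2n})^{⊗3}` realized as operators on `(ℂ^{1|2n})^{⊗3}`. -/
abbrev Mat3 := Matrix (Fin (NN n) × Fin (NN n) × Fin (NN n))
  (Fin (NN n) × Fin (NN n) × Fin (NN n)) ℂ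

/-- The elementary tensor `e_{ij} ⊗ e_{kl} ⊗ e_{mp}` as an operator on `(ℂ^{1|2n})^{⊗3}`
with the Koszul sign convention. -/
def elemT3 (i j k l m p : Fin (NN n)) : Mat3 n := fun x y =>
  if x = (i, k, m) ∧ y = (j, l, p) then
    sg ((pb k + pb l) * pb j + (pb m + pb p) * (pb j + pb l))
  else 0

/-- `P` placed in the tensor factors 1 and 2 of `End(ℂ^{1|2n})^{⊗3}`. -/
def P12 : Mat3 n := ∑ i : Fin (NN n), ∑ j : Fin (NN n), ∑ m : Fin (NN n),
  sg (pb j) • elemT3 n i j j i m m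

/-- `P` placed in the tensor factors 1 and 3. -/
def P13 : Mat3 n := ∑ i : Fin (NN n), ∑ j : Fin (NN n), ∑ m : Fin (NN n),
  sg (pb j) • elemT3 n i j m m j i

/-- `P` placed in the tensor factors 2 and 3. -/
def P23 : Mat3 n := ∑ i : Fin (NN n), ∑ j : Fin (NN n), ∑ m : Fin (NN n),
  sg (pb j) • elemT3 n m m i j j i

/-- `Q` placed in the tensor factors 1 and 2. -/
def Q12 : Mat3 n := ∑ i : Fin (NN n), ∑ j : Fin (NN n), ∑ m : Fin (NN n),
  (sg (pb i * pb j) * tau i * tau j) • elemT3 n i j (pr i) (pr j) m m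

/-- `Q` placed in the tensor factors 1 and 3. -/
def Q13 : Mat3 n := ∑ i : Fin (NN n), ∑ j : Fin (NN n), ∑ m : Fin (NN n),
  (sg (pb i * pb j) * tau i * tau j) • elemT3 n i j m m (pr i) (pr j)

/-- `Q` placed in the tensor factors 2 and 3. -/
def Q23 : Mat3 n := ∑ i : Fin (NN n), ∑ j : Fin (NN n), ∑ m : Fin (NN n),
  (sg (pb i * pb j) * tau i * tau j) • elemT3 n m m i j (pr i) (pr j)

/-- The `R`-matrix `R(w) = 1 − P/w + Q/(w−κ)` with `P`, `Q` placed in a given pair of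
tensor factors. -/
def Rmat3 (Pm Qm : Mat3 n) (w : ℂ) : Mat3 n :=
  1 - w⁻¹ • Pm + (w - kappa n)⁻¹ • Qm

end SuperTranspose

section glYangian

/-- The free algebra on the generators `t°_{ij}^{(r)}`, `r ≥ 1`, of the Yangian `Y(gl_N)`. -/
abbrev FGl (N : ℕ) := FreeAlgebra ℂ (Fin N × Fin N × ℕ)

/-- The coefficients of the generating series `t°_{ij}(u)` of `Y(gl_N)` in the free algebra. -/
def glgen (N : ℕ) : Fin N → Fin N → ℕ → FGl N := fun i j r =>
  if r = 0 then (if i = j then 1 else 0) else FreeAlgebra.ι ℂ (i, j, r - 1)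

/-- Left-hand side of the defining relation of `Y(gl_N)`:
`(u−v)[t°_{ij}(u), t°_{kl}(v)]` multiplied by `xy` (`x = u⁻¹`, `y = v⁻¹`). -/
def relLgl (N : ℕ) (t : Fin N → Fin N → ℕ → FGl N) (i j k l : Fin N) :
    PowerSeries (PowerSeries (FGl N)) :=
  (Yv (FGl N) - Xv (FGl N)) * (Tx t i j * Ty t k l - Ty t k l * Tx t i j)

/-- Right-hand side of the defining relation of `Y(gl_N)`:
`t°_{kj}(u)t°_{il}(v) − t°_{kj}(v)t°_{il}(u)` multiplied by `xy`. -/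
def relRgl (N : ℕ) (t : Fin N → Fin N → ℕ → FGl N) (i j k l : Fin N) :
    PowerSeries (PowerSeries (FGl N)) :=
  (Xv (FGl N) * Yv (FGl N)) * (Tx t k j * Ty t i l - Ty t k j * Tx t i l)

/-- The defining relations of `Y(gl_N)`. -/
def glrel (N : ℕ) : FGl N → FGl N → Prop := fun a b =>
  ∃ (i j k l : Fin N) (r s : ℕ),
    a = PowerSeries.coeff s
          (PowerSeries.coeff r (relLgl N (glgen N) i j k l)) ∧
    b = PowerSeries.coeff s
          (PowerSeries.coeff r (relRgl N (glgen N) i j k l))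

/-- The Yangian `Y(gl_N)`. -/
abbrev Ygl (N : ℕ) := RingQuot (glrel N)

/-- The generator `t°_{ij}^{(r)}` of `Y(gl_N)` (`TG N i j 0 = δ_{ij}`). -/
def TG (N : ℕ) (i j : Fin N) (r : ℕ) : Ygl N :=
  RingQuot.mkAlgHom ℂ (glrel N) (glgen N i j r)

/-- The embedding of index sets `{1,…,n} ↪ {1,…,2n+1}` used for `Y(gl_n) ↪ X(osp_{1|2n})`. -/
def embgl {n : ℕ} (i : Fin n) : Fin (NN n) :=
  idx (i : ℕ) (by have h : (i : ℕ) < n := i.isLt; omega)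

end glYangian

/-- `k ≤ n` implies `k ≤ 2n+1`. -/
theorem le_NN {k n : ℕ} (h : k ≤ n) : k ≤ NN n := by
  have h2 : k ≤ 2 * n + 1 := by omega
  exact h2



end OspYangian

namespace OspYangian

/-!
Choose `θ ∈ V*` with `θ ξ = 1` and apply `F ↦ θ(F ξ)` coefficientwise to the defining relation
for `[t_{cd}(u), t_{c′d′}(v)]` with `c ≤ n`, `d < n`. Since `ξ` is a highest vector, every term
ending in some `t_{ij}` with `i < j` drops out and the diagonal terms become `λ_c(u) λ_{c′}(v)`.
For the sums `T_c = Σ_p ± θ(t_{c′p′}(v) t_{cp}(u) ξ)` this gives the recursion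
`(u − v − κ) T_c = (u − v − κ) λ_c(u) λ_{c′}(v) + Σ_{p<c} (T_c − T_p)`, hence
`(u − v − κ − c − 1)(T_{c+1} − T_c) = (u − v − κ)(λ_{c+1}(u) λ_{(c+1)′}(v) − λ_c(u) λ_{c′}(v))`.
Substituting `v = u − κ − c − 1 = u + n − c − 1/2` kills the left side and turns `u − v − κ` into
`c + 1 ≠ 0`.
-/

open PowerSeries

section CoefficientMap

variable {A B : Type*} [Ring A] [Algebra ℂ A] [Ring B] [Algebra ℂ B]

def map₂ (φ : A →ₐ[ℂ] B) : PowerSeries (PowerSeries A) →+* PowerSeries (PowerSeries B) :=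
  map (map φ.toRingHom)

@[simp]
lemma coeff_coeff_map₂ (φ : A →ₐ[ℂ] B) (F : PowerSeries (PowerSeries A)) (r s : ℕ) :
    coeff s (coeff r (map₂ φ F)) = φ (coeff s (coeff r F)) := by
  simp [map₂, coeff_map]

lemma map₂_smul (φ : A →ₐ[ℂ] B) (c : ℂ) (F : PowerSeries (PowerSeries A)) :
    map₂ φ (c • F) = c • map₂ φ F := by
  ext r s
  simp

lemma map₂_Xv (φ : A →ₐ[ℂ] B) : map₂ φ (Xv A) = Xv B := by
  simp [map₂, Xv]

lemma map₂_Yv (φ : A →ₐ[ℂ] B) : map₂ φ (Yv A) = Yv B := by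
  simp [map₂, Yv]

lemma map₂_Tx {I : Type*} (φ : A →ₐ[ℂ] B) (t : I → I → ℕ → A) (i j : I) :
    map₂ φ (Tx t i j) = Tx (fun a b r => φ (t a b r)) i j := by
  ext r s
  simp only [Tx, map₂, map_C, coeff_C]
  split_ifs <;> simp

lemma map₂_Ty {I : Type*} (φ : A →ₐ[ℂ] B) (t : I → I → ℕ → A) (i j : I) :
    map₂ φ (Ty t i j) = Ty (fun a b r => φ (t a b r)) i j := by
  ext r s
  simp only [Ty, map₂, coeff_map, coeff_mk, coeff_C]
  split_ifs <;> simp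

lemma map₂_relL (φ : A →ₐ[ℂ] B) (n : ℕ) (t : Fin (NN n) → Fin (NN n) → ℕ → A)
    (i j k l : Fin (NN n)) :
    map₂ φ (relL n t i j k l) = relL n (fun a b r => φ (t a b r)) i j k l := by
  simp only [relL, map_mul, map_sub, map₂_smul, map₂_Xv, map₂_Yv, map₂_Tx, map₂_Ty]

lemma map₂_relR (φ : A →ₐ[ℂ] B) (n : ℕ) (t : Fin (NN n) → Fin (NN n) → ℕ → A)
    (i j k l : Fin (NN n)) :
    map₂ φ (relR n t i j k l) = relR n (fun a b r => φ (t a b r)) i j k l := by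
  simp only [relR, map_mul, map_sub, map_sum, apply_ite (map₂ φ), map_zero, map₂_smul,
    map₂_Xv, map₂_Yv, map₂_Tx, map₂_Ty]

end CoefficientMap

lemma satisfiesRTT_TT (n : ℕ) : SatisfiesRTT n (TT n) := by
  intro i j k l
  have hrel : map₂ (RingQuot.mkAlgHom ℂ (yrel n)) (relL n (fgen n) i j k l) =
      map₂ (RingQuot.mkAlgHom ℂ (yrel n)) (relR n (fgen n) i j k l) := by
    ext r s
    simp only [coeff_coeff_map₂]
    exact RingQuot.mkAlgHom_rel ℂ ⟨i, j, k, l, r, s, rfl, rfl⟩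
  rwa [map₂_relL, map₂_relR] at hrel

section Pairing

variable {A : Type*} [Ring A] [Algebra ℂ A]
  {V : Type*} [AddCommGroup V] [Module ℂ V] [Module A V] [IsScalarTower ℂ A V]
  (θ : Module.Dual ℂ V) (ξ : V)

def pairing : PowerSeries (PowerSeries A) →ₗ[ℂ] PowerSeries (PowerSeries ℂ) where
  toFun F := mk fun r => mk fun s => θ (coeff s (coeff r F) • ξ)
  map_add' F G := by ext r s; simp [add_smul]
  map_smul' c F := by ext r s; simp [smul_assoc]

@[simp]
lemma coeff_coeff_pairing (F : PowerSeries (PowerSeries A)) (r s : ℕ) :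
    coeff s (coeff r (pairing θ ξ F)) = θ (coeff s (coeff r F) • ξ) := by
  simp [pairing]

variable {θ ξ} in
lemma pairing_one (hθ : θ ξ = 1) : pairing θ ξ (1 : PowerSeries (PowerSeries A)) = 1 := by
  ext r s
  rw [coeff_coeff_pairing]
  by_cases hr : r = 0 <;> by_cases hs : s = 0 <;> simp [hr, hs, coeff_one, hθ]

lemma pairing_map₂_mul (σ : PowerSeries (PowerSeries ℂ)) (F : PowerSeries (PowerSeries A)) :
    pairing θ ξ (map₂ (Algebra.ofId ℂ A) σ * F) = σ * pairing θ ξ F := by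
  ext r s
  simp only [coeff_coeff_pairing, coeff_mul, map_sum, Finset.sum_smul]
  refine Finset.sum_congr rfl fun p _ => Finset.sum_congr rfl fun q _ => ?_
  rw [coeff_coeff_map₂, Algebra.ofId_apply, mul_smul, algebraMap_smul, map_smul, smul_eq_mul]

variable {I : Type*} {t : I → I → ℕ → A} {i j : I}

lemma pairing_mul_Tx_of_eigen {μ : PowerSeries ℂ} (h : ∀ r, t i j r • ξ = coeff r μ • ξ)
    (F : PowerSeries (PowerSeries A)) :
    pairing θ ξ (F * Tx t i j) = pairing θ ξ F * C μ := by
  ext r s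
  rw [coeff_mul_C, coeff_mul, coeff_coeff_pairing, Tx, coeff_mul_C, coeff_mul,
    Finset.sum_smul, map_sum]
  refine Finset.sum_congr rfl fun q _ => ?_
  rw [mul_smul, coeff_mk, h, smul_comm, map_smul, smul_eq_mul, mul_comm, coeff_coeff_pairing]

lemma pairing_mul_Ty_of_eigen {μ : PowerSeries ℂ} (h : ∀ r, t i j r • ξ = coeff r μ • ξ)
    (F : PowerSeries (PowerSeries A)) :
    pairing θ ξ (F * Ty t i j) = pairing θ ξ F * map C μ := by
  ext r s
  rw [coeff_mul, map_sum, coeff_coeff_pairing, coeff_mul, map_sum, Finset.sum_smul, map_sum]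
  refine Finset.sum_congr rfl fun p _ => ?_
  rw [Ty, coeff_mk, coeff_map, coeff_mul_C, coeff_mul_C, mul_smul, h, smul_comm, map_smul,
    smul_eq_mul, mul_comm, coeff_coeff_pairing]

lemma pairing_mul_Tx_of_annihilates (h : ∀ r, t i j r • ξ = 0)
    (F : PowerSeries (PowerSeries A)) : pairing θ ξ (F * Tx t i j) = 0 := by
  rw [pairing_mul_Tx_of_eigen θ ξ (μ := 0) (by simpa using h), map_zero, mul_zero]

lemma pairing_mul_Ty_of_annihilates (h : ∀ r, t i j r • ξ = 0)
    (F : PowerSeries (PowerSeries A)) : pairing θ ξ (F * Ty t i j) = 0 := by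
  rw [pairing_mul_Ty_of_eigen θ ξ (μ := 0) (by simpa using h), map_zero, mul_zero]

end Pairing

section Signs

variable {n : ℕ}

lemma pb_pr (i : Fin (NN n)) : pb (pr i) = pb i := by
  have : (i : ℕ) < 2 * n + 1 := i.isLt
  unfold pb pr idx
  by_cases h : (i : ℕ) = n
  · simp [h, two_mul]
  · rw [if_neg (by simp only; omega), if_neg h]

lemma pb_of_ne {i : Fin (NN n)} (h : (i : ℕ) ≠ n) : pb i = 1 := if_neg h

lemma pb_mul_self (i : Fin (NN n)) : pb i * pb i = pb i := by
  unfold pb; split_ifs <;> rfl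

lemma tau_of_le {i : Fin (NN n)} (h : (i : ℕ) ≤ n) : tau i = 1 := if_pos h

lemma sg_add (a b : ℕ) : sg (a + b) = sg a * sg b := pow_add _ _ _

lemma sg_mul_self (a : ℕ) : sg a * sg a = 1 := by
  rw [← sg_add, sg, ← two_mul, pow_mul, neg_one_sq, one_pow]

lemma sg_two_mul (a : ℕ) : sg (2 * a) = 1 := by
  rw [two_mul, sg_add, sg_mul_self]

lemma sg_mul_self_exp (a : ℕ) : sg (a * a) = sg a := by
  rcases Nat.even_or_odd a with h | h <;> simp [sg, pow_mul, h.neg_one_pow]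

lemma pr_lt_pr {i j : Fin (NN n)} (h : j < i) : pr i < pr j := by
  have : (i : ℕ) < 2 * n + 1 := i.isLt
  simp only [pr, idx, Fin.lt_def] at h ⊢
  omega

lemma lt_pr {c d : Fin (NN n)} (hc : (c : ℕ) ≤ n) (hd : (d : ℕ) < n) : c < pr d := by
  have : (d : ℕ) < 2 * n + 1 := d.isLt
  simp only [pr, idx, Fin.lt_def]
  omega

end Signs

structure IsSingularVector (n : ℕ) {V : Type*} [AddCommGroup V] [Module ℂ V] [Module (XX n) V]
    (ξ : V) (lam : Fin (NN n) → PowerSeries ℂ) : Prop where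
  annihilated : ∀ i j : Fin (NN n), i < j → ∀ r, TT n i j r • ξ = 0
  eigen : ∀ i : Fin (NN n), ∀ r, TT n i i r • ξ = coeff r (lam i) • ξ

lemma IsHighestWeight.isSingularVector {n : ℕ} {V : Type*} [AddCommGroup V] [Module ℂ V]
    [Module (XX n) V] {ξ : V} {lam : Fin (NN n) → PowerSeries ℂ}
    (h : IsHighestWeight n ξ lam) : IsSingularVector n ξ lam :=
  ⟨h.2.2.1, h.2.2.2.1⟩

/-- `(u − v)xy`, where `x = u⁻¹`, `y = v⁻¹`. -/
def denP : PowerSeries (PowerSeries ℂ) := Yv ℂ - Xv ℂ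

/-- `(u − v − β)xy`, where `x = u⁻¹`, `y = v⁻¹`. -/
def den (β : ℂ) : PowerSeries (PowerSeries ℂ) := Yv ℂ - Xv ℂ - β • (Xv ℂ * Yv ℂ)

lemma map₂_denP {A : Type*} [Ring A] [Algebra ℂ A] :
    map₂ (Algebra.ofId ℂ A) denP = Yv A - Xv A := by
  rw [denP, map_sub, map₂_Xv, map₂_Yv]

lemma map₂_den {A : Type*} [Ring A] [Algebra ℂ A] (β : ℂ) :
    map₂ (Algebra.ofId ℂ A) (den β) = Yv A - Xv A - β • (Xv A * Yv A) := by
  rw [den, map_sub, map_sub, map₂_smul, map_mul, map₂_Xv, map₂_Yv]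

lemma map₂_xy {A : Type*} [Ring A] [Algebra ℂ A] :
    map₂ (Algebra.ofId ℂ A) (Xv ℂ * Yv ℂ) = Xv A * Yv A := by
  rw [map_mul, map₂_Xv, map₂_Yv]

lemma Xv_ne_zero : Xv ℂ ≠ 0 := by
  rw [Xv, Ne, map_eq_zero_iff _ (C_injective)]
  exact X_ne_zero

lemma xy_ne_zero : Xv ℂ * Yv ℂ ≠ 0 := mul_ne_zero Xv_ne_zero X_ne_zero

lemma denP_ne_zero : denP ≠ 0 := by
  intro h
  have := congrArg (coeff 1) h
  simp [denP, Xv, Yv] at this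

/-- `λ_c(u) λ_{c′}(v)`. -/
def lamProd {n : ℕ} (lam : Fin (NN n) → PowerSeries ℂ) (c : Fin (NN n)) :
    PowerSeries (PowerSeries ℂ) :=
  C (lam c) * map C (lam (pr c))

section MatrixElements

variable {n : ℕ} {V : Type*} [AddCommGroup V] [Module ℂ V] [Module (XX n) V]
  [IsScalarTower ℂ (XX n) V] (θ : Module.Dual ℂ V) (ξ : V)

/-- `θ(t_{cd}(u) t_{c′d′}(v) ξ)`. -/
def pairUV (c d : Fin (NN n)) : PowerSeries (PowerSeries ℂ) :=
  pairing θ ξ (Tx (TT n) c d * Ty (TT n) (pr c) (pr d))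

/-- `θ(t_{c′d′}(v) t_{cd}(u) ξ)`. -/
def pairVU (c d : Fin (NN n)) : PowerSeries (PowerSeries ℂ) :=
  pairing θ ξ (Ty (TT n) (pr c) (pr d) * Tx (TT n) c d)

def sumUV (d : Fin (NN n)) : PowerSeries (PowerSeries ℂ) :=
  ∑ p, (sg (pb d * pb p) * tau p) • pairUV θ ξ p d

def sumVU (c : Fin (NN n)) : PowerSeries (PowerSeries ℂ) :=
  ∑ p, (sg (pb p * (1 + pb c)) * tau p) • pairVU θ ξ c p

lemma pairing_relL (c d : Fin (NN n)) :
    pairing θ ξ (relL n (TT n) c d (pr c) (pr d)) =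
      denP * den (kappa n) * (pairUV θ ξ c d - sg (pb c + pb d) • pairVU θ ξ c d) := by
  rw [relL, ← map₂_den, ← map₂_denP, ← map_mul, pairing_map₂_mul, map_sub, map_smul, pb_pr,
    pb_pr, sg_mul_self_exp]
  rfl

lemma pairing_relR (c d : Fin (NN n)) :
    pairing θ ξ (relR n (TT n) c d (pr c) (pr d)) =
      Xv ℂ * Yv ℂ * den (kappa n) * (sg (pb c * pb d + pb c * pb (pr c) + pb d * pb (pr c)) •
        (pairing θ ξ (Tx (TT n) (pr c) d * Ty (TT n) c (pr d))
          - pairing θ ξ (Ty (TT n) (pr c) d * Tx (TT n) c (pr d))))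
      - Xv ℂ * Yv ℂ * denP * ((sg (pb c * (1 + pb d)) * tau c) • sumUV θ ξ d
          - (sg (pb d + pb c + pb d * pb c) * tau d) • sumVU θ ξ c) := by
  rw [relR, if_pos rfl, if_pos rfl, ← map₂_den, ← map₂_denP, ← map₂_xy, ← map_mul, ← map_mul,
    map_sub, pairing_map₂_mul, pairing_map₂_mul, map_smul, map_sub, map_sub, map_sum, map_sum,
    sumUV, sumVU, Finset.smul_sum, Finset.smul_sum]
  congr 3 <;> refine Finset.sum_congr rfl fun p _ => ?_ <;> rw [map_smul, smul_smul]
  · congr 1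
    rw [sg_add, sg_add, mul_add, mul_one, sg_add]
    ring
  · congr 1
    rw [pb_pr, pb_mul_self, show pb d + pb p + pb c + pb d * pb c + pb c * pb p
      = pb d + pb c + pb d * pb c + pb p * (1 + pb c) by ring, sg_add]
    ring

end MatrixElements

section HighestVector

variable {n : ℕ} {V : Type*} [AddCommGroup V] [Module ℂ V] [Module (XX n) V]
  [IsScalarTower ℂ (XX n) V] {θ : Module.Dual ℂ V} {ξ : V} {lam : Fin (NN n) → PowerSeries ℂ}

lemma pairUV_of_lt (hξ : IsSingularVector n ξ lam) {c d : Fin (NN n)} (h : d < c) :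
    pairUV θ ξ c d = 0 :=
  pairing_mul_Ty_of_annihilates θ ξ (hξ.annihilated _ _ (pr_lt_pr h)) _

lemma pairVU_of_lt (hξ : IsSingularVector n ξ lam) {c d : Fin (NN n)} (h : c < d) :
    pairVU θ ξ c d = 0 :=
  pairing_mul_Tx_of_annihilates θ ξ (hξ.annihilated _ _ h) _

lemma pairUV_self (hθ : θ ξ = 1) (hξ : IsSingularVector n ξ lam) (c : Fin (NN n)) :
    pairUV θ ξ c c = lamProd lam c := by
  rw [pairUV, pairing_mul_Ty_of_eigen θ ξ (hξ.eigen _), ← one_mul (Tx _ c c),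
    pairing_mul_Tx_of_eigen θ ξ (hξ.eigen _), pairing_one hθ, one_mul, lamProd]

lemma pairVU_self (hθ : θ ξ = 1) (hξ : IsSingularVector n ξ lam) (c : Fin (NN n)) :
    pairVU θ ξ c c = lamProd lam c := by
  rw [pairVU, pairing_mul_Tx_of_eigen θ ξ (hξ.eigen _), ← one_mul (Ty _ (pr c) (pr c)),
    pairing_mul_Ty_of_eigen θ ξ (hξ.eigen _), pairing_one hθ, one_mul, lamProd, mul_comm]

lemma den_mul_pairUV_sub_pairVU (hξ : IsSingularVector n ξ lam) {c d : Fin (NN n)}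
    (hc : (c : ℕ) ≤ n) (hd : (d : ℕ) < n) :
    den (kappa n) * (pairUV θ ξ c d - sg (pb c + 1) • pairVU θ ξ c d) =
      -(Xv ℂ * Yv ℂ * (sumUV θ ξ d + sumVU θ ξ c)) := by
  -- the remaining terms of the relation end in `t_{c d′}` with `c < d′`, which kills `ξ`
  have hcd : c < pr d := lt_pr hc hd
  have h := congrArg (pairing θ ξ) (satisfiesRTT_TT n c d (pr c) (pr d))
  rw [pairing_relL, pairing_relR, pairing_mul_Ty_of_annihilates θ ξ (hξ.annihilated _ _ hcd),
    pairing_mul_Tx_of_annihilates θ ξ (hξ.annihilated _ _ hcd), sub_self, smul_zero, mul_zero,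
    zero_sub, pb_of_ne hd.ne, tau_of_le hc, tau_of_le hd.le] at h
  have hS : sg (pb c * (1 + 1)) * 1 = 1 := by
    rw [mul_one, mul_comm, one_add_one_eq_two, sg_two_mul]
  have hT : sg (1 + pb c + 1 * pb c) * 1 = -1 := by
    rw [mul_one, one_mul, add_assoc, ← two_mul, sg_add, sg_two_mul, mul_one, sg, pow_one]
  rw [hS, hT, one_smul, neg_one_smul] at h
  apply mul_left_cancel₀ denP_ne_zero
  linear_combination h

lemma sumUV_add_sumVU_self (hθ : θ ξ = 1) (hξ : IsSingularVector n ξ lam) {c : Fin (NN n)}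
    (hc : (c : ℕ) < n) : sumUV θ ξ c + sumVU θ ξ c = 0 := by
  have h := den_mul_pairUV_sub_pairVU (θ := θ) hξ hc.le hc
  rw [pairUV_self hθ hξ, pairVU_self hθ hξ, pb_of_ne hc.ne, one_add_one_eq_two,
    show sg 2 = 1 from sg_two_mul 1, one_smul, sub_self, mul_zero, zero_eq_neg] at h
  exact (mul_eq_zero.mp h).resolve_left xy_ne_zero

lemma sg_smul_den_mul_pairVU (hξ : IsSingularVector n ξ lam) {c d : Fin (NN n)} (hdc : d < c)
    (hc : (c : ℕ) ≤ n) :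
    sg (pb c + 1) • (den (kappa n) * pairVU θ ξ c d) =
      Xv ℂ * Yv ℂ * (sumUV θ ξ d + sumVU θ ξ c) := by
  have h := den_mul_pairUV_sub_pairVU (θ := θ) hξ hc (lt_of_lt_of_le hdc hc)
  rw [pairUV_of_lt hξ hdc, zero_sub, mul_neg, neg_inj, mul_smul_comm] at h
  exact h

lemma den_mul_sumVU (hθ : θ ξ = 1) (hξ : IsSingularVector n ξ lam) {c : Fin (NN n)}
    (hc : (c : ℕ) ≤ n) :
    den (kappa n) * sumVU θ ξ c = den (kappa n) * lamProd lam c +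
      Xv ℂ * Yv ℂ * ∑ p ∈ Finset.Iio c, (sumVU θ ξ c - sumVU θ ξ p) := by
  have htrunc : sumVU θ ξ c =
      ∑ p ∈ Finset.Iic c, (sg (pb p * (1 + pb c)) * tau p) • pairVU θ ξ c p := by
    refine (Finset.sum_subset (Finset.subset_univ _) fun p _ hp => ?_).symm
    rw [pairVU_of_lt hξ (not_le.mp (by simpa using hp)), smul_zero]
  have hdiag : sg (pb c * (1 + pb c)) * tau c = 1 := by
    rw [tau_of_le hc, mul_one, mul_add, mul_one, pb_mul_self, ← two_mul, sg_two_mul]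
  conv_lhs => rw [htrunc, ← Finset.Iio_insert, Finset.sum_insert Finset.notMem_Iio_self, hdiag,
    one_smul, pairVU_self hθ hξ, mul_add, Finset.mul_sum]
  rw [Finset.mul_sum]
  refine congrArg _ (Finset.sum_congr rfl fun p hp => ?_)
  have hpc : p < c := Finset.mem_Iio.mp hp
  have hpn : (p : ℕ) < n := lt_of_lt_of_le hpc hc
  rw [pb_of_ne hpn.ne, tau_of_le hpn.le, one_mul, mul_one, add_comm, mul_smul_comm,
    sg_smul_den_mul_pairVU hξ hpc hc, eq_neg_of_add_eq_zero_left (sumUV_add_sumVU_self hθ hξ hpn)]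
  ring

lemma den_mul_sumVU_sub (hθ : θ ξ = 1) (hξ : IsSingularVector n ξ lam) {c c₁ : Fin (NN n)}
    (hc₁ : (c₁ : ℕ) = c + 1) (hn : (c₁ : ℕ) ≤ n) :
    den (kappa n + (c : ℕ) + 1) * (sumVU θ ξ c₁ - sumVU θ ξ c) =
      den (kappa n) * (lamProd lam c₁ - lamProd lam c) := by
  have h := den_mul_sumVU hθ hξ (c := c) (by omega)
  have h₁ := den_mul_sumVU hθ hξ hn
  have hIio : Finset.Iio c₁ = insert c (Finset.Iio c) := by
    ext p
    simp only [Finset.mem_Iio, Finset.mem_insert, Fin.lt_def, Fin.ext_iff]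
    omega
  have hsum : ∑ p ∈ Finset.Iio c, (sumVU θ ξ c₁ - sumVU θ ξ p) =
      ∑ p ∈ Finset.Iio c, (sumVU θ ξ c - sumVU θ ξ p) +
        (c : ℕ) * (sumVU θ ξ c₁ - sumVU θ ξ c) := by
    rw [← Fin.card_Iio c, ← nsmul_eq_mul, ← Finset.sum_const, ← Finset.sum_add_distrib]
    exact Finset.sum_congr rfl fun p _ => by abel
  have hden : den (kappa n + (c : ℕ) + 1) =
      den (kappa n) - ((c : ℕ) + 1) * (Xv ℂ * Yv ℂ) := by
    rw [den, den, add_assoc, add_smul, Algebra.smul_def (((c : ℕ) : ℂ) + 1), map_add, map_natCast,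
      map_one]
    abel
  rw [hIio, Finset.sum_insert Finset.notMem_Iio_self, hsum] at h₁
  rw [hden]
  linear_combination h₁ - h

end HighestVector

section Evaluation

variable {R : Type*} [CommRing R]

/-- `F(x, σ(x))` for `F ∈ R⟦x⟧⟦y⟧`. When `σ` has no constant term only the `y^s` with `s ≤ m`
contribute to the coefficient of `x^m`, so the truncation to `s ≤ m` is harmless. -/
def evalY (σ : PowerSeries R) : PowerSeries (PowerSeries R) →ₗ[R] PowerSeries R where
  toFun F := mk fun m => ∑ s ∈ Finset.range (m + 1), coeff m (coeff s F * σ ^ s)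
  map_add' F G := by ext m; simp [add_mul, Finset.sum_add_distrib]
  map_smul' c F := by ext m; simp [Finset.mul_sum]

lemma coeff_evalY (σ : PowerSeries R) (F : PowerSeries (PowerSeries R)) (m : ℕ) :
    coeff m (evalY σ F) = ∑ s ∈ Finset.range (m + 1), coeff m (coeff s F * σ ^ s) := by
  simp [evalY]

variable {σ : PowerSeries R}

lemma coeff_mul_pow_eq_zero (hσ : constantCoeff σ = 0) (f : PowerSeries R) {m s : ℕ}
    (h : m < s) : coeff m (f * σ ^ s) = 0 :=
  X_pow_dvd_iff.mp ((pow_dvd_pow_of_dvd (X_dvd_iff.mpr hσ) s).mul_left f) m h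

lemma coeff_evalY_eq_coeff_sum (hσ : constantCoeff σ = 0) (F : PowerSeries (PowerSeries R))
    {m N : ℕ} (h : m < N) :
    coeff m (evalY σ F) = coeff m (∑ s ∈ Finset.range N, coeff s F * σ ^ s) := by
  rw [coeff_evalY, map_sum]
  refine Finset.sum_subset (Finset.range_subset_range.mpr h) fun s _ hs => ?_
  exact coeff_mul_pow_eq_zero hσ _ (by simpa using hs)

lemma coeff_mul_evalY (hσ : constantCoeff σ = 0) (g : PowerSeries R)
    (F : PowerSeries (PowerSeries R)) {m N : ℕ} (h : m < N) :
    coeff m (g * ∑ s ∈ Finset.range N, coeff s F * σ ^ s) = coeff m (g * evalY σ F) := by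
  rw [coeff_mul, coeff_mul]
  refine Finset.sum_congr rfl fun p hp => ?_
  rw [coeff_evalY_eq_coeff_sum hσ F
    ((Finset.HasAntidiagonal.antidiagonal.snd_le hp).trans_lt h)]

lemma evalY_C_mul (hσ : constantCoeff σ = 0) (f : PowerSeries R)
    (F : PowerSeries (PowerSeries R)) : evalY σ (C f * F) = f * evalY σ F := by
  ext m
  rw [coeff_evalY_eq_coeff_sum hσ _ m.lt_succ_self, ← coeff_mul_evalY hσ f F m.lt_succ_self]
  simp only [coeff_C_mul, Finset.mul_sum, mul_assoc]

lemma evalY_X_mul (hσ : constantCoeff σ = 0) (F : PowerSeries (PowerSeries R)) :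
    evalY σ (X * F) = σ * evalY σ F := by
  ext m
  rw [coeff_evalY_eq_coeff_sum hσ _ (m.lt_succ_self.trans (m + 1).lt_succ_self),
    ← coeff_mul_evalY hσ σ F m.lt_succ_self, Finset.sum_range_succ', coeff_zero_X_mul, zero_mul,
    add_zero, Finset.mul_sum]
  simp only [coeff_succ_X_mul, pow_succ]
  congr 1
  exact Finset.sum_congr rfl fun s _ => by ring

/-- `x/(1 − βx)`: for `x = u⁻¹` this is `(u − β)⁻¹`. -/
def shiftVar (β : R) : PowerSeries R := X * rescale β (mk 1)

lemma constantCoeff_shiftVar (β : R) : constantCoeff (shiftVar β) = 0 := by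
  simp [shiftVar]

lemma one_sub_mul_shiftVar (β : R) : (1 - C β * X) * shiftVar β = X := by
  have h : rescale β (1 - X : PowerSeries R) * rescale β (mk 1) = 1 := by
    rw [← map_mul, mul_comm, mk_one_mul_one_sub_eq_one, map_one]
  rw [map_sub, map_one, rescale_X] at h
  rw [shiftVar, mul_left_comm, h, mul_one]

lemma coeff_shiftVar_pow (β : R) {s m : ℕ} (h : s ≤ m) :
    coeff m (shiftVar β ^ s) = ((m - 1).choose (m - s) : R) * β ^ (m - s) := by
  rw [shiftVar, mul_pow, ← map_pow, coeff_X_pow_mul', if_pos h, coeff_rescale, mul_comm]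
  rcases s with _ | d
  · rcases m with _ | m <;> simp [coeff_one]
  · rw [mk_one_pow_eq_mk_choose_add, coeff_mk, show d + (m - (d + 1)) = m - 1 by omega,
      ← Nat.choose_symm (by omega : d ≤ m - 1), show m - 1 - d = m - (d + 1) by omega]

lemma shiftVar_ne_zero [Nontrivial R] (β : R) : shiftVar β ≠ 0 := fun h =>
  X_ne_zero (R := R) (by simpa [h] using (one_sub_mul_shiftVar β).symm)

end Evaluation

lemma evalY_map_C_shiftVar (a : ℂ) (f : PowerSeries ℂ) :
    evalY (shiftVar (-a)) (map C f) = shiftSeries a f := by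
  ext m
  rw [coeff_evalY, shiftSeries, coeff_mk, shiftCoeff]
  refine Finset.sum_congr rfl fun s hs => ?_
  rw [coeff_map, coeff_C_mul, coeff_shiftVar_pow _ (Finset.mem_range_succ_iff.mp hs), neg_pow,
    smul_eq_mul]
  ring

lemma evalY_den_mul (β : ℂ) (F : PowerSeries (PowerSeries ℂ)) :
    evalY (shiftVar β) (den β * F) = 0 := by
  have hσ := constantCoeff_shiftVar β
  have h : den β * F = X * (C (1 - C β * X) * F) - C X * F := by
    rw [den, Yv, Xv, Algebra.smul_def, PowerSeries.algebraMap_apply, map_sub, map_one, map_mul,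
      PowerSeries.algebraMap_eq]
    ring
  rw [h, map_sub, evalY_X_mul hσ, evalY_C_mul hσ, evalY_C_mul hσ, ← mul_assoc, mul_comm _ (1 - _),
    one_sub_mul_shiftVar, sub_self]

lemma evalY_lamProd {n : ℕ} (lam : Fin (NN n) → PowerSeries ℂ) (a : ℂ) (c : Fin (NN n)) :
    evalY (shiftVar (-a)) (lamProd lam c) = lam c * shiftSeries a (lam (pr c)) := by
  rw [lamProd, evalY_C_mul (constantCoeff_shiftVar _), evalY_map_C_shiftVar]

lemma lam_mul_shiftSeries_eq_succ {n : ℕ} {V : Type*} [AddCommGroup V] [Module ℂ V]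
    [Module (XX n) V] [IsScalarTower ℂ (XX n) V] {θ : Module.Dual ℂ V} {ξ : V}
    {lam : Fin (NN n) → PowerSeries ℂ} (hθ : θ ξ = 1) (hξ : IsSingularVector n ξ lam) {c c₁ : Fin (NN n)}
    (hc₁ : (c₁ : ℕ) = c + 1) (hn : (c₁ : ℕ) ≤ n) :
    lam c * shiftSeries ((n : ℂ) - (c : ℕ) - 1 / 2) (lam (pr c)) =
      lam c₁ * shiftSeries ((n : ℂ) - (c : ℕ) - 1 / 2) (lam (pr c₁)) := by
  set a : ℂ := (n : ℂ) - (c : ℕ) - 1 / 2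
  have hβ : kappa n + (c : ℕ) + 1 = -a := by simp only [a, kappa]; ring
  have hden : den (kappa n) = den (-a) + ((c : ℕ) + 1 : ℂ) • (C X * X) := by
    rw [← hβ, den, den, Xv, Yv, add_assoc, add_smul, mul_comm (C X)]
    abel
  have hσ := constantCoeff_shiftVar (-a)
  have h := congrArg (evalY (shiftVar (-a))) (den_mul_sumVU_sub hθ hξ hc₁ hn)
  rw [hβ, evalY_den_mul, hden, add_mul, map_add, evalY_den_mul, zero_add, smul_mul_assoc,
    map_smul, mul_assoc, evalY_C_mul hσ, evalY_X_mul hσ, eq_comm, smul_eq_zero] at h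
  have hsub : evalY (shiftVar (-a)) (lamProd lam c₁ - lamProd lam c) = 0 := by
    rcases h with h | h
    · exact absurd h (Nat.cast_add_one_ne_zero _)
    · simpa [X_ne_zero, shiftVar_ne_zero] using h
  rw [map_sub, sub_eq_zero, evalY_lamProd, evalY_lamProd] at hsub
  exact hsub.symm

theorem hw_consistency_general
    (n : ℕ) (V : Type) [AddCommGroup V] [Module ℂ V]
    [Module (XX n) V] [IsScalarTower ℂ (XX n) V]
    (ξ : V) (lam : Fin (NN n) → PowerSeries ℂ)
    (h : IsHighestWeight n ξ lam) :
    Consistent n lam := by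
  obtain ⟨θ, hθ⟩ := Module.Projective.exists_dual_eq_one ℂ h.1
  intro i hi
  exact lam_mul_shiftSeries_eq_succ hθ h.isSingularVector (c := idx i (by omega))
    (c₁ := idx (i + 1) (by omega)) rfl hi

/-- The eigenvalue series `λ_i(u)` of a highest weight representation of
`X(osp_{1|2n})` satisfy the consistency conditions
`λ_i(u) λ_{i′}(u+n−i+1/2) = λ_{i+1}(u) λ_{(i+1)′}(u+n−i+1/2)` for `i = 1,…,n`. -/
theorem hw_consistency
    (n : ℕ) (hn : 1 ≤ n) (V : Type) [AddCommGroup V] [Module ℂ V]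
    [Module (XX n) V] [IsScalarTower ℂ (XX n) V]
    (ξ : V) (lam : Fin (NN n) → PowerSeries ℂ)
    (h : IsHighestWeight n ξ lam) :
    Consistent n lam :=
  hw_consistency_general n V ξ lam h

end OspYangian
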